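/- arXiv:0707.1418 — 3 statements merged into one kernel-verified Lean document; each statement's English description precedes it below -/
import Mathlib

section
/- If f ∈ WAP(X,ω), then the map s ↦ [x ↦ (f/ω)(sx)·Ω(se,x)] from S into C(X) is continuous when C(X) carries the weak topology. -/
open scoped ENNReal
open BoundedContinuousFunction

/-- `ω` is a weight on `(X, mul)`: positive, submultiplicative, and `ω`, `ω⁻¹`
bounded on compact subsets. -/
def IsWeight {X : Type*} [TopologicalSpace X] (mul : X → X → X) (ω : X → ℝ) : Prop :=
  (∀ x, 0 < ω x) ∧ (∀ x y, ω (mul x y) ≤ ω x * ω y) ∧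
  (∀ K : Set X, IsCompact K → ∃ M : ℝ, ∀ x ∈ K, ω x ≤ M) ∧
  (∀ K : Set X, IsCompact K → ∃ m : ℝ, 0 < m ∧ ∀ x ∈ K, m ≤ ω x)

/-- `C(X, ω)`: continuous `f : X → ℝ` with `f/ω` bounded and continuous. -/
def Cw {X : Type*} [TopologicalSpace X] (ω : X → ℝ) : Set (X → ℝ) :=
  {f | Continuous f ∧ ∃ g : X →ᵇ ℝ, ∀ x, g x = f x / ω x}

/-- The set of weighted left translates `ₛ(f/ω)·ₛΩ`, where
`ₛΩ(x) = Ω(s•e, x) = ω((s•e)x)/(ω(s•e)ω(x))`, realized in `C_b(X)`. -/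
def wTrans {S X : Type*} [TopologicalSpace X] (act : S → X → X) (mul : X → X → X)
    (ω : X → ℝ) (e : X) (f : X → ℝ) : Set (X →ᵇ ℝ) :=
  {g | ∃ s : S, ∀ x, g x =
    (f (act s x) / ω (act s x)) * (ω (mul (act s e) x) / (ω (act s e) * ω x))}

/-- Weighted almost periodic functions: weighted left translates relatively
norm-compact in `C_b(X)`. -/
def APw {S X : Type*} [TopologicalSpace X] (act : S → X → X) (mul : X → X → X)
    (ω : X → ℝ) (e : X) : Set (X → ℝ) :=
  {f | f ∈ Cw ω ∧ IsCompact (closure (wTrans act mul ω e f))}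

/-- Weighted weakly almost periodic functions: weighted left translates
relatively compact in the weak topology of `C_b(X)`. -/
def WAPw {S X : Type*} [TopologicalSpace X] (act : S → X → X) (mul : X → X → X)
    (ω : X → ℝ) (e : X) : Set (X → ℝ) :=
  {f | f ∈ Cw ω ∧
    IsCompact (closure ((toWeakSpace ℝ (X →ᵇ ℝ)) '' wTrans act mul ω e f))}

/-- Weighted left uniformly continuous functions: `s ↦ ₛ(f/ω)·ₛΩ` is norm
continuous from `S` into `C_b(X)`. -/
def LUCw {S X : Type*} [TopologicalSpace S] [TopologicalSpace X] (act : S → X → X)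
    (mul : X → X → X) (ω : X → ℝ) (e : X) : Set (X → ℝ) :=
  {f | f ∈ Cw ω ∧ ∃ T : S → (X →ᵇ ℝ), Continuous T ∧ ∀ s x, T s x =
    (f (act s x) / ω (act s x)) * (ω (mul (act s e) x) / (ω (act s e) * ω x))}

/-- Weighted right uniformly continuous functions: `x ↦ (f/ω)(·x)·Ω(·e,x)` is
norm continuous from `X` into `C_b(S)`. -/
def RUCw {S X : Type*} [TopologicalSpace S] [TopologicalSpace X] (act : S → X → X)
    (mul : X → X → X) (ω : X → ℝ) (e : X) : Set (X → ℝ) :=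
  {f | f ∈ Cw ω ∧ ∃ U : X → (S →ᵇ ℝ), Continuous U ∧ ∀ x s, U x s =
    (f (act s x) / ω (act s x)) * (ω (mul (act s e) x) / (ω (act s e) * ω x))}

/-!
Each translate `ₛ(f/ω)·ₛΩ` is a bounded continuous function, since `0 < ₛΩ ≤ 1` by
submultiplicativity of `ω`, and `s ↦ ₛ(f/ω)·ₛΩ(x)` is continuous for each fixed `x`.
Point evaluations are weakly continuous and separate points of `C_b(X)`, so on the weakly
compact closure of the translates the weak topology agrees with the (Hausdorff) topology of
pointwise convergence; pointwise continuity of `s ↦ ₛ(f/ω)·ₛΩ` is therefore weak continuity.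
-/

theorem IsCompact.continuous_of_continuous_comp {S Y Z : Type*} [TopologicalSpace S]
    [TopologicalSpace Y] [TopologicalSpace Z] [T2Space Z] {K : Set Y} (hK : IsCompact K)
    {φ : Y → Z} (hφ : Continuous φ) (hinj : K.InjOn φ) {g : S → Y} (hgK : ∀ s, g s ∈ K)
    (hg : Continuous (φ ∘ g)) : Continuous g := by
  have : CompactSpace K := isCompact_iff_compactSpace.mp hK
  have hemb : Topology.IsClosedEmbedding (K.domRestrict φ) :=
    (hφ.comp continuous_subtype_val).isClosedEmbedding hinj.injective
  have hgK' : Continuous (Set.codRestrict g K hgK) :=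
    hemb.isEmbedding.continuous_iff.mpr hg
  exact continuous_subtype_val.comp hgK'

namespace BoundedContinuousFunction

variable {X 𝕜 : Type*} [TopologicalSpace X] [NormedField 𝕜]

theorem continuous_coeFn_toWeakSpace_symm :
    Continuous fun v : WeakSpace 𝕜 (X →ᵇ 𝕜) => ⇑((toWeakSpace 𝕜 (X →ᵇ 𝕜)).symm v) :=
  continuous_pi fun x =>
    WeakBilin.eval_continuous (topDualPairing 𝕜 (X →ᵇ 𝕜)).flip (evalCLM 𝕜 x)

theorem continuous_toWeakSpace_of_isCompact {S : Type*} [TopologicalSpace S]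
    {K : Set (WeakSpace 𝕜 (X →ᵇ 𝕜))} (hK : IsCompact K) {T : S → X →ᵇ 𝕜}
    (hTK : ∀ s, toWeakSpace 𝕜 (X →ᵇ 𝕜) (T s) ∈ K) (hT : ∀ x, Continuous fun s => T s x) :
    Continuous fun s => toWeakSpace 𝕜 (X →ᵇ 𝕜) (T s) := by
  refine hK.continuous_of_continuous_comp continuous_coeFn_toWeakSpace_symm ?_ hTK ?_
  · intro u _ v _ huv
    exact (toWeakSpace 𝕜 (X →ᵇ 𝕜)).symm.injective (DFunLike.coe_injective huv)
  · exact continuous_pi fun x => by simpa using hT x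

end BoundedContinuousFunction

section WeightedTranslate

variable {S X : Type*} [TopologicalSpace X]

noncomputable def weightedTranslate (act : S → X → X) (mul : X → X → X) (ω : X → ℝ) (e : X)
    (f : X → ℝ) (s : S) (x : X) : ℝ :=
  (f (act s x) / ω (act s x)) * (ω (mul (act s e) x) / (ω (act s e) * ω x))

variable {act : S → X → X} {mul : X → X → X} {ω : X → ℝ} {e : X} {f : X → ℝ}

theorem continuous_weightedTranslate (hf : Continuous f) (hω : Continuous ω)
    (hω0 : ∀ x, ω x ≠ 0) (hacts : ∀ s, Continuous (act s)) (hmuls : ∀ x, Continuous (mul x))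
    (s : S) : Continuous (weightedTranslate act mul ω e f s) :=
  ((hf.comp (hacts s)).div (hω.comp (hacts s)) fun _ => hω0 _).mul
    ((hω.comp (hmuls _)).div (continuous_const.mul hω) fun _ => mul_ne_zero (hω0 _) (hω0 _))

theorem continuous_weightedTranslate_apply [TopologicalSpace S] (hf : Continuous f)
    (hω : Continuous ω) (hω0 : ∀ x, ω x ≠ 0) (hactx : ∀ x, Continuous fun s => act s x)
    (hmulx : ∀ y, Continuous fun x => mul x y) (x : X) :
    Continuous fun s => weightedTranslate act mul ω e f s x :=
  ((hf.comp (hactx x)).div (hω.comp (hactx x)) fun _ => hω0 _).mul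
    ((hω.comp ((hmulx x).comp (hactx e))).div ((hω.comp (hactx e)).mul continuous_const)
      fun _ => mul_ne_zero (hω0 _) (hω0 _))

theorem abs_weightedTranslate_le (hpos : ∀ x, 0 < ω x)
    (hsub : ∀ x y, ω (mul x y) ≤ ω x * ω y) {g : X →ᵇ ℝ} (hg : ∀ x, g x = f x / ω x)
    (s : S) (x : X) : |weightedTranslate act mul ω e f s x| ≤ ‖g‖ := by
  have hΩ0 : 0 ≤ ω (mul (act s e) x) / (ω (act s e) * ω x) :=
    div_nonneg (hpos _).le (mul_pos (hpos _) (hpos _)).le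
  have hΩ1 : ω (mul (act s e) x) / (ω (act s e) * ω x) ≤ 1 :=
    (div_le_one (mul_pos (hpos _) (hpos _))).mpr (hsub _ _)
  have hfω : |f (act s x) / ω (act s x)| ≤ ‖g‖ := by
    rw [← hg, ← Real.norm_eq_abs]; exact g.norm_coe_le_norm _
  calc |weightedTranslate act mul ω e f s x|
      = |f (act s x) / ω (act s x)| * (ω (mul (act s e) x) / (ω (act s e) * ω x)) := by
        rw [weightedTranslate, abs_mul, abs_of_nonneg hΩ0]
    _ ≤ ‖g‖ * 1 := mul_le_mul hfω hΩ1 hΩ0 (norm_nonneg _)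
    _ = ‖g‖ := mul_one _

end WeightedTranslate

theorem stmt5_general {S X : Type*} [TopologicalSpace S] [TopologicalSpace X]
    (act : S → X → X) (mul : X → X → X) (ω : X → ℝ) (e : X)
    (hω : IsWeight mul ω) (hωc : Continuous ω)
    (hacts : ∀ s, Continuous (act s)) (hactx : ∀ x, Continuous fun s => act s x)
    (hmuls : ∀ x : X, Continuous (mul x)) (hmulx : ∀ y : X, Continuous fun x => mul x y)
    (f : X → ℝ) (hf : f ∈ WAPw act mul ω e) :
    ∃ T : S → (X →ᵇ ℝ),
      (∀ s x, T s x =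
        (f (act s x) / ω (act s x)) * (ω (mul (act s e) x) / (ω (act s e) * ω x))) ∧
      Continuous fun s => toWeakSpace ℝ (X →ᵇ ℝ) (T s) := by
  obtain ⟨⟨hfc, g, hg⟩, hK⟩ := hf
  obtain ⟨hpos, hsub, -, -⟩ := hω
  have hω0 : ∀ x, ω x ≠ 0 := fun x => (hpos x).ne'
  let T : S → X →ᵇ ℝ := fun s =>
    ofNormedAddCommGroup (weightedTranslate act mul ω e f s)
      (continuous_weightedTranslate hfc hωc hω0 hacts hmuls s) ‖g‖
      (abs_weightedTranslate_le hpos hsub hg s)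
  refine ⟨T, fun _ _ => rfl, continuous_toWeakSpace_of_isCompact hK ?_ ?_⟩
  · exact fun s => subset_closure ⟨T s, ⟨s, fun _ => rfl⟩, rfl⟩
  · exact continuous_weightedTranslate_apply hfc hωc hω0 hactx hmulx

/-- if `f ∈ WAP(X,ω)`, then `s ↦ ₛ(f/ω)·ₛΩ` is continuous from
`S` into `C_b(X)` equipped with the weak topology. -/
theorem stmt5 {S X : Type*} [TopologicalSpace S] [TopologicalSpace X]
    (act : S → X → X) (mul : X → X → X) (ω : X → ℝ) (e : X)
    (hω : IsWeight mul ω) (hωc : Continuous ω)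
    (he : ∀ x, mul e x = x ∧ mul x e = x)
    (hacts : ∀ s, Continuous (act s)) (hactx : ∀ x, Continuous fun s => act s x)
    (hmuls : ∀ x : X, Continuous (mul x)) (hmulx : ∀ y : X, Continuous fun x => mul x y)
    (f : X → ℝ) (hf : f ∈ WAPw act mul ω e) :
    ∃ T : S → (X →ᵇ ℝ),
      (∀ s x, T s x =
        (f (act s x) / ω (act s x)) * (ω (mul (act s e) x) / (ω (act s e) * ω x))) ∧
      Continuous fun s => toWeakSpace ℝ (X →ᵇ ℝ) (T s) :=
  stmt5_general act mul ω e hω hωc hacts hactx hmuls hmulx f hf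
end

section
/- Let (S,X,ω) be a compact Hausdorff weighted semitopological transformation semigroup (S compact Hausdorff semitopological semigroup acting separately continuously on compact Hausdorff X), and let T = { t ∈ S : tS = S and tX = X } be a dense subsemigroup of S. Then for each f ∈ C(X,ω), the map s ↦ [x ↦ (f/ω)(sx)] from S to (C(X), ‖·‖∞) is norm continuous at every point of T. -/
/-!
Put `F s x = (f / ω) (s x)`; it is separately continuous on the compact space `S × X`.
A Namioka-type argument shows that for every `ε > 0` some nonempty open `A ⊆ S` satisfies
`dist (F a x) (F b x) ≤ ε` for all `a, b ∈ A` and all `x ∈ X`. Otherwise, refining finite covers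
of `X` on which `F cₙ` is almost constant, one builds pairs `(cₙ, xₙ)` with
`dist (F cₙ₊₁ xₙ) (F cₙ xₙ) > ε / 2`, and a cluster point of this sequence in `S × X`
contradicts separate continuity.
Given `t₀ ∈ T`, since `t₀ S = S` and `T` is dense there is `t ∈ T` with `t₀ t ∈ A`; then `s t ∈ A`
for `s` near `t₀`, and since `t X = X` the uniform estimate for `s t, t₀ t` is one for `s, t₀`.
-/
open scoped ENNReal
open BoundedContinuousFunction

open Filter Topology Metric Set

section Oscillation

variable {S X E : Type*} [TopologicalSpace S] [PseudoMetricSpace E]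

def EverywhereOscillating (F : S → X → E) (ε : ℝ) (A : Set S) (Z : Set X) : Prop :=
  ∀ A₁ ⊆ A, IsOpen A₁ → A₁.Nonempty → ∃ a ∈ A₁, ∃ b ∈ A₁, ∃ x ∈ Z, ε < dist (F a x) (F b x)

namespace EverywhereOscillating

variable {F : S → X → E} {ε : ℝ} {A : Set S} {Z : Set X}

lemma mono (h : EverywhereOscillating F ε A Z) {A' : Set S} {Z' : Set X} (hA : A' ⊆ A)
    (hZ : Z ⊆ Z') : EverywhereOscillating F ε A' Z' := fun A₁ hA₁ ho hne =>
  let ⟨a, ha, b, hb, x, hx, hab⟩ := h A₁ (hA₁.trans hA) ho hne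
  ⟨a, ha, b, hb, x, hZ hx, hab⟩

lemma or_exists_of_union {Z₁ Z₂ : Set X} (h : EverywhereOscillating F ε A (Z₁ ∪ Z₂)) :
    EverywhereOscillating F ε A Z₁ ∨
      ∃ A₁ ⊆ A, IsOpen A₁ ∧ A₁.Nonempty ∧ EverywhereOscillating F ε A₁ Z₂ := by
  refine or_iff_not_imp_left.2 fun h₁ => ?_
  obtain ⟨A₁, hA₁, ho, hne, hcalm⟩ : ∃ A₁ ⊆ A, IsOpen A₁ ∧ A₁.Nonempty ∧
      ∀ a ∈ A₁, ∀ b ∈ A₁, ∀ x ∈ Z₁, dist (F a x) (F b x) ≤ ε := by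
    simpa [EverywhereOscillating] using h₁
  refine ⟨A₁, hA₁, ho, hne, fun A₂ hA₂ ho₂ hne₂ => ?_⟩
  obtain ⟨a, ha, b, hb, x, hx | hx, hab⟩ := h A₂ (hA₂.trans hA₁) ho₂ hne₂
  · exact absurd hab (hcalm a (hA₂ ha) b (hA₂ hb) x hx).not_gt
  · exact ⟨a, ha, b, hb, x, hx, hab⟩

lemma exists_of_biUnion {ι : Type*} {s : Finset ι} {W : ι → Set X} (hA : IsOpen A)
    (hne : A.Nonempty) (h : EverywhereOscillating F ε A (⋃ i ∈ s, W i)) :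
    ∃ i ∈ s, ∃ A₁ ⊆ A, IsOpen A₁ ∧ A₁.Nonempty ∧ EverywhereOscillating F ε A₁ (W i) := by
  classical
  induction s using Finset.induction_on generalizing A with
  | empty =>
    obtain ⟨-, -, -, -, x, hx, -⟩ := h A subset_rfl hA hne
    simp at hx
  | insert i s _ ih =>
    rw [Finset.set_biUnion_insert] at h
    rcases h.or_exists_of_union with h' | ⟨A₁, hA₁, ho, hne₁, h'⟩
    · exact ⟨i, Finset.mem_insert_self i s, A, subset_rfl, hA, hne, h'⟩
    · obtain ⟨j, hj, A₂, hA₂, h''⟩ := ih ho hne₁ h'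
      exact ⟨j, Finset.mem_insert_of_mem hj, A₂, hA₂.trans hA₁, h''⟩

end EverywhereOscillating

variable [TopologicalSpace X]

structure OscillationState (S X : Type*) where
  A : Set S
  Z : Set X
  c : S
  x : X

namespace OscillationState

def IsValid (F : S → X → E) (ε : ℝ) (σ : OscillationState S X) : Prop :=
  IsOpen σ.A ∧ IsClosed σ.Z ∧ σ.c ∈ σ.A ∧ σ.x ∈ σ.Z ∧ EverywhereOscillating F ε σ.A σ.Z

def IsSuccessor (F : S → X → E) (ε γ : ℝ) (σ σ' : OscillationState S X) : Prop :=
  σ'.A ⊆ σ.A ∧ σ'.Z ⊆ σ.Z ∧ (∀ s ∈ σ'.A, dist (F s σ.x) (F σ.c σ.x) ≤ γ) ∧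
    (∀ y ∈ σ'.Z, ∀ y' ∈ σ'.Z, dist (F σ.c y) (F σ.c y') ≤ γ) ∧
    ε / 2 < dist (F σ'.c σ'.x) (F σ.c σ'.x)

variable {F : S → X → E} {ε γ : ℝ}

lemma exists_isSuccessor [CompactSpace X] (hFs : ∀ x, Continuous fun s => F s x)
    (hFx : ∀ s, Continuous (F s)) (hγ : 0 < γ) {σ : OscillationState S X}
    (hσ : σ.IsValid F ε) : ∃ σ', σ'.IsValid F ε ∧ IsSuccessor F ε γ σ σ' := by
  obtain ⟨hAo, hZc, hcA, -, hosc⟩ := hσ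
  set A' := σ.A ∩ (fun s => F s σ.x) ⁻¹' ball (F σ.c σ.x) γ
  have hA'o : IsOpen A' := hAo.inter (isOpen_ball.preimage (hFs σ.x))
  have hcA' : σ.c ∈ A' := ⟨hcA, mem_ball_self hγ⟩
  set Q : X → Set X := fun p => F σ.c ⁻¹' closedBall (F σ.c p) (γ / 2)
  obtain ⟨P, hP⟩ := CompactSpace.elim_nhds_subcover Q fun p =>
    (hFx σ.c).continuousAt.preimage_mem_nhds (closedBall_mem_nhds _ (half_pos hγ))
  have hcover : σ.Z ⊆ ⋃ p ∈ P, σ.Z ∩ Q p := fun y hy => by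
    have hyQ : y ∈ ⋃ p ∈ P, Q p := hP ▸ trivial
    simp only [mem_iUnion] at hyQ ⊢
    obtain ⟨p, hp, hyp⟩ := hyQ
    exact ⟨p, hp, hy, hyp⟩
  obtain ⟨p, -, A₁, hA₁, hA₁o, hA₁ne, hosc₁⟩ :=
    (hosc.mono inter_subset_left hcover).exists_of_biUnion hA'o ⟨_, hcA'⟩
  obtain ⟨a, ha, b, hb, y, hy, hab⟩ := hosc₁ A₁ subset_rfl hA₁o hA₁ne
  obtain ⟨c', hc', hfar⟩ : ∃ c' ∈ A₁, ε / 2 < dist (F c' y) (F σ.c y) := by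
    by_contra! h
    linarith [dist_triangle_right (F a y) (F b y) (F σ.c y), h a ha, h b hb]
  have hflat : ∀ y ∈ σ.Z ∩ Q p, ∀ y' ∈ σ.Z ∩ Q p, dist (F σ.c y) (F σ.c y') ≤ γ :=
    fun y hy y' hy' => by
      linarith [dist_triangle_right (F σ.c y) (F σ.c y') (F σ.c p), mem_closedBall.1 hy.2,
        mem_closedBall.1 hy'.2]
  have hZ'c : IsClosed (σ.Z ∩ Q p) := hZc.inter (isClosed_closedBall.preimage (hFx σ.c))
  exact ⟨⟨A₁, σ.Z ∩ Q p, c', y⟩, ⟨hA₁o, hZ'c, hc', hy, hosc₁⟩, hA₁.trans inter_subset_left,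
    inter_subset_left, fun s hs => (hA₁ hs).2.le, hflat, hfar⟩

theorem false_of_isSuccessor_chain [CompactSpace S] [CompactSpace X]
    (hFs : ∀ x, Continuous fun s => F s x) (hFx : ∀ s, Continuous (F s)) (hγ : 0 < γ)
    (hγε : 8 * γ ≤ ε) {σ : ℕ → OscillationState S X} (hvalid : ∀ n, (σ n).IsValid F ε)
    (hsucc : ∀ n, IsSuccessor F ε γ (σ n) (σ (n + 1))) : False := by
  have hA_anti : Antitone fun n => (σ n).A := antitone_nat_of_succ_le fun n => (hsucc n).1
  have hZ_anti : Antitone fun n => (σ n).Z := antitone_nat_of_succ_le fun n => (hsucc n).2.1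
  -- `S × X` need not be sequentially compact, so we pass to a cluster point instead.
  obtain ⟨⟨c₀, y₀⟩, -, hclu⟩ := isCompact_univ.exists_mapClusterPt (f := atTop)
    (u := fun n => ((σ n).c, (σ (n + 1)).x)) (by simp)
  have hy₀ : ∀ m, y₀ ∈ (σ (m + 1)).Z := fun m =>
    (hvalid (m + 1)).2.1.mem_of_mapClusterPt (hclu.tendsto_comp (continuous_snd.tendsto _))
      (eventually_atTop.2 ⟨m, fun n hn =>
        hZ_anti (show m + 1 ≤ n + 1 by omega) (hvalid (n + 1)).2.2.2.1⟩)
  have hc₀ : ∀ m, dist (F c₀ (σ (m + 1)).x) (F (σ (m + 1)).c (σ (m + 1)).x) ≤ γ := fun m =>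
    (isClosed_closedBall.preimage (hFs _)).mem_of_mapClusterPt
      (hclu.tendsto_comp (continuous_fst.tendsto _))
      (eventually_atTop.2 ⟨m + 2, fun n hn =>
        (hsucc (m + 1)).2.2.1 _ (hA_anti hn (hvalid n).2.2.1)⟩)
  have hnear : ∀ᶠ p : S × X in 𝓝 (c₀, y₀),
      dist (F c₀ p.2) (F c₀ y₀) < γ ∧ dist (F p.1 y₀) (F c₀ y₀) < γ :=
    ((((hFx c₀).comp continuous_snd).tendsto _).eventually (ball_mem_nhds _ hγ)).and
      ((((hFs y₀).comp continuous_fst).tendsto _).eventually (ball_mem_nhds _ hγ))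
  obtain ⟨m, h₁, h₂⟩ := (hclu.frequently hnear).exists
  dsimp only at h₁ h₂
  have h₃ := hc₀ m
  set y := (σ (m + 1)).x
  set a := (σ m).c
  set a' := (σ (m + 1)).c
  have hflat : dist (F a y) (F a y₀) ≤ γ := (hsucc m).2.2.2.1 _ (hvalid (m + 1)).2.2.2.1 _ (hy₀ m)
  have : ε / 2 < 4 * γ := calc
    ε / 2 < dist (F a' y) (F a y) := (hsucc m).2.2.2.2
    _ ≤ dist (F a' y) (F c₀ y) + dist (F c₀ y) (F c₀ y₀) + dist (F c₀ y₀) (F a y₀) +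
        dist (F a y₀) (F a y) := by
      linarith [dist_triangle4 (F a' y) (F c₀ y) (F c₀ y₀) (F a y₀),
        dist_triangle (F a' y) (F a y₀) (F a y)]
    _ < 4 * γ := by
      linarith [dist_comm (F a' y) (F c₀ y), dist_comm (F c₀ y₀) (F a y₀),
        dist_comm (F a y₀) (F a y)]
  linarith

end OscillationState

open OscillationState in
theorem not_everywhereOscillating [CompactSpace S] [CompactSpace X] {F : S → X → E}
    (hFs : ∀ x, Continuous fun s => F s x) (hFx : ∀ s, Continuous (F s)) {ε : ℝ}
    (hε : 0 < ε) {A : Set S} {Z : Set X} (hA : IsOpen A) (hne : A.Nonempty) (hZ : IsClosed Z) :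
    ¬ EverywhereOscillating F ε A Z := by
  intro hosc
  obtain ⟨c, hc, -, -, x, hx, -⟩ := hosc A subset_rfl hA hne
  have hγ : 0 < ε / 8 := by positivity
  have : Nonempty (OscillationState S X) := ⟨⟨A, Z, c, x⟩⟩
  choose! next hnext_valid hnext using
    fun (σ : OscillationState S X) (hσ : σ.IsValid F ε) => exists_isSuccessor hFs hFx hγ hσ
  set σ : ℕ → OscillationState S X := fun n => next^[n] ⟨A, Z, c, x⟩
  have hvalid : ∀ n, (σ n).IsValid F ε := by
    intro n
    induction n with
    | zero => exact ⟨hA, hZ, hc, hx, hosc⟩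
    | succ n ih => simpa only [σ, Function.iterate_succ_apply'] using hnext_valid _ ih
  refine false_of_isSuccessor_chain hFs hFx hγ (by linarith) hvalid fun n => ?_
  simpa only [σ, Function.iterate_succ_apply'] using hnext _ (hvalid n)

theorem exists_isOpen_forall_dist_le [CompactSpace S] [CompactSpace X] [Nonempty S]
    {F : S → X → E} (hFs : ∀ x, Continuous fun s => F s x) (hFx : ∀ s, Continuous (F s))
    {ε : ℝ} (hε : 0 < ε) :
    ∃ A : Set S, IsOpen A ∧ A.Nonempty ∧ ∀ a ∈ A, ∀ b ∈ A, ∀ x, dist (F a x) (F b x) ≤ ε := by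
  simpa [EverywhereOscillating] using
    not_everywhereOscillating hFs hFx hε isOpen_univ univ_nonempty isClosed_univ

end Oscillation

theorem continuousAt_compContinuous_act {S X E : Type*} [TopologicalSpace S] [TopologicalSpace X]
    [CompactSpace S] [CompactSpace X] [PseudoMetricSpace E] (opS : S → S → S) (act : S → X → X)
    (hopSl : ∀ s, Continuous (opS s)) (hopSr : ∀ t, Continuous fun s => opS s t)
    (hacts : ∀ s, Continuous (act s)) (hactx : ∀ x, Continuous fun s => act s x)
    (haction : ∀ s t x, act s (act t x) = act (opS s t) x)
    (hdense : Dense {t | Function.Surjective (act t)}) (g : X →ᵇ E) {t₀ : S}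
    (ht₀ : Function.Surjective (opS t₀)) :
    ContinuousAt (fun s => g.compContinuous ⟨act s, hacts s⟩) t₀ := by
  have : Nonempty S := ⟨t₀⟩
  refine Metric.continuousAt_iff'.2 fun ε hε => ?_
  obtain ⟨A, hAo, ⟨a, ha⟩, hA⟩ := exists_isOpen_forall_dist_le (F := fun s x => g (act s x))
    (fun x => g.continuous.comp (hactx x)) (fun s => g.continuous.comp (hacts s)) (half_pos hε)
  obtain ⟨u, rfl⟩ := ht₀ a
  obtain ⟨t, htA, ht⟩ := hdense.inter_open_nonempty _ (hAo.preimage (hopSl t₀)) ⟨u, ha⟩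
  filter_upwards [(hAo.preimage (hopSr t)).mem_nhds htA] with s hs
  refine ((BoundedContinuousFunction.dist_le (half_pos hε).le).2 fun x => ?_).trans_lt
    (half_lt_self hε)
  obtain ⟨y, rfl⟩ := ht x
  simpa only [compContinuous_apply, ContinuousMap.coe_mk, haction] using hA _ hs _ htA y

theorem stmt14_general {S X : Type*} [TopologicalSpace S] [TopologicalSpace X]
    [CompactSpace S] [CompactSpace X]
    (opS : S → S → S) (act : S → X → X) (ω : X → ℝ)
    (hopSl : ∀ s : S, Continuous (opS s)) (hopSr : ∀ t : S, Continuous fun s => opS s t)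
    (hacts : ∀ s, Continuous (act s)) (hactx : ∀ x, Continuous fun s => act s x)
    (haction : ∀ s t x, act s (act t x) = act (opS s t) x)
    (T : Set S)
    (hT : T = {t : S | Function.Surjective (opS t) ∧ Function.Surjective (act t)})
    (hdense : Dense T) :
    ∀ f ∈ Cw (X := X) ω, ∃ Φ : S → (X →ᵇ ℝ),
      (∀ s x, Φ s x = f (act s x) / ω (act s x)) ∧
      ∀ t ∈ T, ContinuousAt Φ t := by
  rintro f ⟨-, g, hg⟩
  subst hT
  refine ⟨fun s => g.compContinuous ⟨act s, hacts s⟩, fun s x => hg (act s x), fun t₀ ht₀ => ?_⟩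
  exact continuousAt_compContinuous_act opS act hopSl hopSr hacts hactx haction
    (hdense.mono fun _ ht => ht.2) g ht₀.1

/-- for `(S,X,ω)` compact Hausdorff semitopological and
`T = {t : tS = S, tX = X}` dense in `S`, for each `f ∈ C(X,ω)` the map
`s ↦ ₛ(f/ω)` from `S` to `(C(X), ‖·‖∞)` is norm continuous at each point
of `T`. -/
theorem stmt14 {S X : Type*} [TopologicalSpace S] [TopologicalSpace X]
    [CompactSpace S] [CompactSpace X] [T2Space S] [T2Space X]
    (opS : S → S → S) (act : S → X → X) (mul : X → X → X) (ω : X → ℝ) (e : X)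
    (hω : IsWeight mul ω) (hωc : Continuous ω)
    (he : ∀ x, mul e x = x ∧ mul x e = x)
    (hopSl : ∀ s : S, Continuous (opS s)) (hopSr : ∀ t : S, Continuous fun s => opS s t)
    (hacts : ∀ s, Continuous (act s)) (hactx : ∀ x, Continuous fun s => act s x)
    (hmuls : ∀ x : X, Continuous (mul x)) (hmulx : ∀ y : X, Continuous fun x => mul x y)
    (haction : ∀ s t x, act s (act t x) = act (opS s t) x)
    (T : Set S)
    (hT : T = {t : S | Function.Surjective (opS t) ∧ Function.Surjective (act t)})
    (hdense : Dense T) :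
    ∀ f ∈ Cw (X := X) ω, ∃ Φ : S → (X →ᵇ ℝ),
      (∀ s x, Φ s x = f (act s x) / ω (act s x)) ∧
      ∀ t ∈ T, ContinuousAt Φ t :=
  stmt14_general opS act ω hopSl hopSr hacts hactx haction T hT hdense
end

section
/- If (S,X,ω) is a compact Hausdorff weighted semitopological transformation semigroup and T = { t ∈ S : tS = S, tX = X } is dense in S, then the restricted action of T on X is jointly continuous, i.e. (T,X,ω) is a topological transformation semigroup. -/
/-!
Fix `t ∈ T` and a continuous `f : X → ℝ`. The maps `x ↦ f (s x)`, `s ∈ S`, form a pointwise compact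
set of continuous functions on the compact space `X`; such a set is fragmented by the sup-distance,
so some nonempty open `U ⊆ S` has uniformly `ε`-close translates `f (s ·)`. Since `tT` is dense
there is `u ∈ T` with `tu ∈ U`, and as `u X = X` the open set `{s | su ∈ U}` is a neighbourhood of
`t` on which `f (s ·)` stays uniformly `ε`-close to `f (t ·)`. Urysohn's lemma turns this into joint
continuity at `(t, x)`.

Fragmentation is proved by contradiction: a non-fragmented set carries a binary tree of open sets
whose two children at each node are `ε/2`-apart at some point. Cluster points along the `2^ℵ₀`
branches are pairwise `ε/2`-apart, yet all of them factor through the compact metrizable space cut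
out by countably many functions of the tree, whose continuous functions form a separable space.
-/

open scoped ENNReal
open BoundedContinuousFunction

open Set Function Filter Topology

instance : Uncountable (ℕ → Bool) := by
  refine ⟨fun h => ?_⟩
  obtain ⟨e, he⟩ := exists_surjective_nat (ℕ → Bool)
  obtain ⟨m, hm⟩ := he fun n => !(e n n)
  simpa using congrFun hm m

theorem countable_of_pairwise_le_dist {E ι : Type*} [PseudoMetricSpace E]
    [TopologicalSpace.SeparableSpace E] {F : ι → E} {δ : ℝ} (hδ : 0 < δ)
    (hF : Pairwise fun i j => δ ≤ dist (F i) (F j)) : Countable ι :=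
  Pairwise.countable_of_isOpen_disjoint (s := fun i => Metric.ball (F i) (δ / 2))
    (fun _ _ hij => Metric.ball_disjoint_ball (by linarith [hF hij]))
    (fun _ => Metric.isOpen_ball) (fun _ => Metric.nonempty_ball.2 (half_pos hδ))

theorem exists_isOpen_nhds_separated_at {X : Type*} {G : Set (X → ℝ)} (hG : IsOpen G)
    {g₀ g₁ : X → ℝ} (hg₀ : g₀ ∈ G) (hg₁ : g₁ ∈ G) {x : X} {ε : ℝ} (hε : 0 < ε)
    (hx : ε < |g₀ x - g₁ x|) :
    ∃ G₀ G₁ : Set (X → ℝ), IsOpen G₀ ∧ IsOpen G₁ ∧ G₀ ⊆ G ∧ G₁ ⊆ G ∧ g₀ ∈ G₀ ∧ g₁ ∈ G₁ ∧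
      ∀ g ∈ closure G₀, ∀ h ∈ closure G₁, ε / 2 ≤ |g x - h x| := by
  let N : (X → ℝ) → Set (X → ℝ) := fun a => G ∩ (fun g => g x) ⁻¹' Metric.ball (a x) (ε / 4)
  have hN : ∀ a, closure (N a) ⊆ (fun g => g x) ⁻¹' Metric.closedBall (a x) (ε / 4) := fun a =>
    closure_minimal (inter_subset_right.trans (preimage_mono Metric.ball_subset_closedBall))
      (Metric.isClosed_closedBall.preimage (continuous_apply x))
  have hmem : ∀ a ∈ G, a ∈ N a := fun a ha => ⟨ha, Metric.mem_ball_self (by positivity)⟩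
  refine ⟨N g₀, N g₁, hG.inter (Metric.isOpen_ball.preimage (continuous_apply x)),
    hG.inter (Metric.isOpen_ball.preimage (continuous_apply x)), inter_subset_left,
    inter_subset_left, hmem g₀ hg₀, hmem g₁ hg₁, fun g hg h hh => ?_⟩
  have h₀ : |g x - g₀ x| ≤ ε / 4 := hN g₀ hg
  have h₁ : |h x - g₁ x| ≤ ε / 4 := hN g₁ hh
  have := abs_sub_le (g₀ x) (g x) (g₁ x)
  have := abs_sub_le (g x) (h x) (g₁ x)
  rw [abs_sub_comm] at h₀
  linarith

theorem factorsThrough_of_mem_closure_range {X ι Z : Type*} [TopologicalSpace Z] [T2Space Z]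
    {c : ι → X → Z} {g : X → Z} (hg : g ∈ closure (range c)) :
    FactorsThrough g fun x i => c i x := fun x x' hxx' =>
  closure_minimal (s := range c) (t := {h | h x = h x'})
    (range_subset_iff.2 fun i => congrFun hxx' i)
    (isClosed_eq (continuous_apply x) (continuous_apply x')) hg

/-- The functions in the pointwise closure of a countable family of continuous functions descend
to the compact metrizable image of `X` in `ℝ^ι`, so they are sup-norm separable. -/
theorem countable_of_pairwise_separated_of_mem_closure_range {X ι κ : Type*}
    [TopologicalSpace X] [CompactSpace X] [Countable ι] {c : ι → X → ℝ}
    (hc : ∀ i, Continuous (c i)) {F : κ → X → ℝ}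
    (hF : ∀ k, F k ∈ closure (range c)) (hFc : ∀ k, Continuous (F k)) {δ : ℝ} (hδ : 0 < δ)
    (hsep : Pairwise fun k k' => ∃ x, δ ≤ |F k x - F k' x|) : Countable κ := by
  let π : C(X, range fun x i => c i x) :=
    ⟨rangeFactorization _, (continuous_pi hc).rangeFactorization⟩
  have hπ : IsQuotientMap π :=
    π.continuous.isClosedMap.isQuotientMap π.continuous rangeFactorization_surjective
  have : CompactSpace (range fun x i => c i x) :=
    isCompact_iff_compactSpace.1 (isCompact_range (continuous_pi hc))
  have hfac : ∀ k, FactorsThrough (ContinuousMap.mk (F k) (hFc k)) π := fun k _ _ h =>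
    factorsThrough_of_mem_closure_range (hF k) (congrArg Subtype.val h)
  let G : κ → C(range fun x i => c i x, ℝ) := fun k => hπ.lift _ (hfac k)
  have hG : ∀ k x, G k (π x) = F k x := fun k x => DFunLike.congr_fun (hπ.lift_comp _ (hfac k)) x
  refine countable_of_pairwise_le_dist (F := G) hδ fun k k' hkk' => ?_
  obtain ⟨x, hx⟩ := hsep hkk'
  calc δ ≤ |F k x - F k' x| := hx
    _ = dist (G k (π x)) (G k' (π x)) := by rw [hG, hG, Real.dist_eq]
    _ ≤ dist (G k) (G k') := ContinuousMap.dist_apply_le_dist _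

theorem exists_binary_tree_of_not_fragmented {X : Type*} {M : Set (X → ℝ)} (hM : M.Nonempty)
    {ε : ℝ} (hε : 0 < ε) (hspread : ∀ G, IsOpen G → (M ∩ G).Nonempty →
      ∃ g ∈ M ∩ G, ∃ h ∈ M ∩ G, ∃ x, ε < |g x - h x|) :
    ∃ node : List Bool → Set (X → ℝ), (∀ w, (M ∩ node w).Nonempty) ∧
      (∀ i w, node (i :: w) ⊆ node w) ∧
      ∀ w, ∃ x, ∀ g ∈ closure (node (true :: w)), ∀ h ∈ closure (node (false :: w)),
        ε / 2 ≤ |g x - h x| := by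
  let Good := {G : Set (X → ℝ) // IsOpen G ∧ (M ∩ G).Nonempty}
  have hsplit : ∀ G : Good, ∃ c : Bool → Good, (∀ i, (c i).1 ⊆ G.1) ∧
      ∃ x, ∀ g ∈ closure (c true).1, ∀ h ∈ closure (c false).1, ε / 2 ≤ |g x - h x| := by
    rintro ⟨G, hG, hne⟩
    obtain ⟨g₀, hg₀, g₁, hg₁, x, hx⟩ := hspread G hG hne
    obtain ⟨G₀, G₁, hG₀, hG₁, hG₀G, hG₁G, hgG₀, hgG₁, hsep⟩ :=
      exists_isOpen_nhds_separated_at hG hg₀.2 hg₁.2 hε hx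
    refine ⟨fun i => cond i ⟨G₀, hG₀, g₀, hg₀.1, hgG₀⟩ ⟨G₁, hG₁, g₁, hg₁.1, hgG₁⟩,
      fun i => ?_, x, hsep⟩
    cases i
    exacts [hG₁G, hG₀G]
  choose child hchild_sub hchild_sep using hsplit
  let node : List Bool → Good :=
    List.foldr (fun i G => child G i) ⟨univ, isOpen_univ, by simpa using hM⟩
  exact ⟨fun w => (node w).1, fun w => (node w).2.2, fun i w => hchild_sub (node w) i,
    fun w => hchild_sep (node w)⟩

def revPrefix (β : ℕ → Bool) : ℕ → List Bool
  | 0 => []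
  | n + 1 => β n :: revPrefix β n

theorem revPrefix_congr {β β' : ℕ → Bool} {n : ℕ} (h : ∀ i < n, β i = β' i) :
    revPrefix β n = revPrefix β' n := by
  induction n with
  | zero => rfl
  | succ n ih =>
    simp only [revPrefix, h n n.lt_succ_self, ih fun i hi => h i (hi.trans n.lt_succ_self)]

theorem exists_revPrefix_eq_of_ne {β β' : ℕ → Bool} (h : β ≠ β') :
    ∃ n, revPrefix β n = revPrefix β' n ∧ β n ≠ β' n := by
  classical
  have hex : ∃ n, β n ≠ β' n := by
    by_contra! h'
    exact h (funext h')
  exact ⟨Nat.find hex, revPrefix_congr fun i hi => not_not.1 (Nat.find_min hex hi),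
    Nat.find_spec hex⟩

theorem pairwise_separated_of_mem_closure_revPrefix {X : Type*} {node : List Bool → Set (X → ℝ)}
    {δ : ℝ}
    (hsep : ∀ w, ∃ x, ∀ g ∈ closure (node (true :: w)), ∀ h ∈ closure (node (false :: w)),
      δ ≤ |g x - h x|)
    {F : (ℕ → Bool) → X → ℝ} (hF : ∀ β n, F β ∈ closure (node (revPrefix β n))) :
    Pairwise fun β β' => ∃ x, δ ≤ |F β x - F β' x| := by
  intro β β' hne
  obtain ⟨n, hpre, hn⟩ := exists_revPrefix_eq_of_ne hne
  have hβ := hF β (n + 1)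
  have hβ' := hF β' (n + 1)
  simp only [revPrefix, hpre] at hβ hβ'
  obtain ⟨x, hx⟩ := hsep (revPrefix β' n)
  refine ⟨x, ?_⟩
  cases hb : β n <;> cases hb' : β' n <;> simp only [hb, hb', ne_eq, not_true_eq_false] at hn hβ hβ'
  · exact abs_sub_comm (F β x) (F β' x) ▸ hx _ hβ' _ hβ
  · exact hx _ hβ _ hβ'

/-- Namioka: a pointwise compact set of continuous functions on a compact space is fragmented by
the sup-distance. -/
theorem IsCompact.exists_isOpen_forall_abs_sub_le {X : Type*} [TopologicalSpace X]
    [CompactSpace X] {M : Set (X → ℝ)} (hM : IsCompact M) (hMne : M.Nonempty)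
    (hMc : ∀ g ∈ M, Continuous g) {ε : ℝ} (hε : 0 < ε) :
    ∃ G : Set (X → ℝ), IsOpen G ∧ (M ∩ G).Nonempty ∧
      ∀ g ∈ M ∩ G, ∀ h ∈ M ∩ G, ∀ x, |g x - h x| ≤ ε := by
  by_contra! hspread
  obtain ⟨node, hne, hmono, hsep⟩ := exists_binary_tree_of_not_fragmented hMne hε hspread
  choose cent hcent using hne
  have hKM : closure (range cent) ⊆ M :=
    closure_minimal (range_subset_iff.2 fun w => (hcent w).1) hM.isClosed
  have hK : IsCompact (closure (range cent)) := hM.of_isClosed_subset isClosed_closure hKM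
  have hbranch : ∀ β : ℕ → Bool,
      ∃ g ∈ closure (range cent), ∀ n, g ∈ closure (node (revPrefix β n)) := by
    intro β
    obtain ⟨g, hg⟩ := IsCompact.nonempty_iInter_of_sequence_nonempty_isCompact_isClosed
      (fun n => closure (range cent) ∩ closure (node (revPrefix β n)))
      (fun n => inter_subset_inter_right _ (closure_mono (hmono _ _)))
      (fun n => ⟨cent _, subset_closure (mem_range_self _), subset_closure (hcent _).2⟩)
      (hK.of_isClosed_subset (isClosed_closure.inter isClosed_closure) inter_subset_left)
      (fun n => isClosed_closure.inter isClosed_closure)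
    rw [mem_iInter] at hg
    exact ⟨g, (hg 0).1, fun n => (hg n).2⟩
  choose F hFK hF using hbranch
  exact not_countable <| countable_of_pairwise_separated_of_mem_closure_range
    (fun w => hMc _ (hcent w).1) hFK (fun β => hMc _ (hKM (hFK β))) (half_pos hε)
    (pairwise_separated_of_mem_closure_revPrefix hsep hF)

section Action

variable {S X : Type*} [TopologicalSpace S] [TopologicalSpace X]

theorem exists_isOpen_forall_abs_sub_le_of_separatelyContinuous [CompactSpace S] [CompactSpace X]
    [Nonempty S] {Φ : S → X → ℝ} (hΦ : Continuous Φ) (hΦx : ∀ s, Continuous (Φ s)) {ε : ℝ}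
    (hε : 0 < ε) :
    ∃ U : Set S, IsOpen U ∧ U.Nonempty ∧ ∀ s ∈ U, ∀ s' ∈ U, ∀ x, |Φ s x - Φ s' x| ≤ ε := by
  obtain ⟨G, hG, ⟨_, ⟨s₀, rfl⟩, hs₀⟩, hsmall⟩ :=
    (isCompact_range hΦ).exists_isOpen_forall_abs_sub_le (range_nonempty Φ)
      (forall_mem_range.2 hΦx) hε
  exact ⟨Φ ⁻¹' G, hG.preimage hΦ, ⟨s₀, hs₀⟩, fun s hs s' hs' =>
    hsmall _ ⟨mem_range_self s, hs⟩ _ ⟨mem_range_self s', hs'⟩⟩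

theorem eventually_forall_abs_comp_act_sub_le [CompactSpace S] [CompactSpace X]
    {opS : S → S → S} {act : S → X → X}
    (hopSl : ∀ s : S, Continuous (opS s)) (hopSr : ∀ t : S, Continuous fun s => opS s t)
    (hacts : ∀ s, Continuous (act s)) (hactx : ∀ x, Continuous fun s => act s x)
    (haction : ∀ s t x, act s (act t x) = act (opS s t) x) {T : Set S} (hdense : Dense T)
    (hT : ∀ u ∈ T, Surjective (act u)) {t : S} (ht : Surjective (opS t)) {f : X → ℝ}
    (hf : Continuous f) {ε : ℝ} (hε : 0 < ε) :
    ∀ᶠ s in 𝓝 t, ∀ x, |f (act s x) - f (act t x)| ≤ ε := by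
  have : Nonempty S := ⟨t⟩
  obtain ⟨U, hU, hUne, hUsmall⟩ := exists_isOpen_forall_abs_sub_le_of_separatelyContinuous
    (Φ := fun s x => f (act s x)) (continuous_pi fun x => hf.comp (hactx x))
    (fun s => hf.comp (hacts s)) hε
  obtain ⟨⟨u, hu⟩, htu⟩ :=
    (ht.denseRange.comp hdense.denseRange_val (hopSl t)).exists_mem_open hU hUne
  filter_upwards [(hopSr u).continuousAt.preimage_mem_nhds (hU.mem_nhds htu)] with s hs x
  obtain ⟨z, rfl⟩ := hT u hu x
  rw [haction, haction]
  exact hUsmall _ hs _ htu z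

theorem continuousAt_of_forall_eventually_abs_sub_le {Y : Type*} [TopologicalSpace Y]
    [NormalSpace Y] [T1Space Y] {act : S → X → Y} {t : S} (ht : Continuous (act t))
    (h : ∀ f : C(Y, ℝ), ∀ ε > 0, ∀ᶠ s in 𝓝 t, ∀ x, |f (act s x) - f (act t x)| ≤ ε) (x₀ : X) :
    ContinuousAt (fun q : S × X => act q.1 q.2) (t, x₀) := by
  refine (nhds_basis_opens _).tendsto_right_iff.2 fun V ⟨hV, hVo⟩ => ?_
  obtain ⟨f, hf0, hf1, -⟩ := exists_continuous_zero_one_of_isClosed hVo.isClosed_compl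
    isClosed_singleton (disjoint_singleton_right.2 (not_not.2 hV))
  have hnear : ∀ᶠ x in 𝓝 x₀, 1 / 2 < f (act t x) :=
    ((f.continuous.comp ht).tendsto x₀).eventually_const_lt
      (by rw [Function.comp_apply, hf1 rfl]; norm_num)
  rw [nhds_prod_eq]
  filter_upwards [(h f (1 / 2) one_half_pos).prod_mk hnear] with q ⟨hs, hx⟩
  by_contra hsx
  have := (abs_le.1 (hs q.2)).1
  rw [hf0 hsx, Pi.zero_apply] at this
  linarith

end Action

theorem stmt15_general {S X : Type*} [TopologicalSpace S] [TopologicalSpace X]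
    [CompactSpace S] [CompactSpace X] [T2Space X]
    (opS : S → S → S) (act : S → X → X)
    (hopSl : ∀ s : S, Continuous (opS s)) (hopSr : ∀ t : S, Continuous fun s => opS s t)
    (hacts : ∀ s, Continuous (act s)) (hactx : ∀ x, Continuous fun s => act s x)
    (haction : ∀ s t x, act s (act t x) = act (opS s t) x)
    (T : Set S)
    (hT : T = {t : S | Function.Surjective (opS t) ∧ Function.Surjective (act t)})
    (hdense : Dense T) :
    Continuous fun p : T × X => act (p.1 : S) p.2 := by
  have hTsurj : ∀ u ∈ T, Surjective (opS u) ∧ Surjective (act u) := fun u hu => by rwa [hT] at hu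
  refine continuous_iff_continuousAt.2 fun ⟨⟨t, ht⟩, x₀⟩ => ?_
  have hjoint : ContinuousAt (fun q : S × X => act q.1 q.2) (t, x₀) :=
    continuousAt_of_forall_eventually_abs_sub_le (hacts t) (fun f ε hε =>
      eventually_forall_abs_comp_act_sub_le hopSl hopSr hacts hactx haction hdense
        (fun u hu => (hTsurj u hu).2) (hTsurj t ht).1 f.continuous hε) x₀
  exact hjoint.comp_of_eq (continuous_subtype_val.prodMap continuous_id).continuousAt rfl

/-- for `(S,X,ω)` compact Hausdorff semitopological with
`T = {t : tS = S, tX = X}` dense in `S`, the restricted action of `T` on `X`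
is jointly continuous, i.e. `(T,X,ω)` is a topological transformation
semigroup. -/
theorem stmt15 {S X : Type*} [TopologicalSpace S] [TopologicalSpace X]
    [CompactSpace S] [CompactSpace X] [T2Space S] [T2Space X]
    (opS : S → S → S) (act : S → X → X) (mul : X → X → X) (ω : X → ℝ) (e : X)
    (hω : IsWeight mul ω) (hωc : Continuous ω)
    (he : ∀ x, mul e x = x ∧ mul x e = x)
    (hopSl : ∀ s : S, Continuous (opS s)) (hopSr : ∀ t : S, Continuous fun s => opS s t)
    (hacts : ∀ s, Continuous (act s)) (hactx : ∀ x, Continuous fun s => act s x)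
    (hmuls : ∀ x : X, Continuous (mul x)) (hmulx : ∀ y : X, Continuous fun x => mul x y)
    (haction : ∀ s t x, act s (act t x) = act (opS s t) x)
    (T : Set S)
    (hT : T = {t : S | Function.Surjective (opS t) ∧ Function.Surjective (act t)})
    (hdense : Dense T) :
    Continuous fun p : T × X => act (p.1 : S) p.2 :=
  stmt15_general opS act hopSl hopSr hacts hactx haction T hT hdense
end
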